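/- Suppose x_1' ∈ [0,1) is feasible. Then: (1) every x_1 ∈ [x_1', 1) is feasible; (2) for every such x_1 and every i = 1,…,n, the upward values satisfy x_i(x_1) ∈ [x_i(x_1'), 1) and w_i(x_1) > d_i; (3) on the interval [x_1', 1), each x_i and each w_i is a strictly increasing function of x_1: if x_1' ≤ y < z < 1 then x_i(y) < x_i(z) and w_i(y) < w_i(z) for every i = 1,…,n. -/

import Mathlib

/-- `upP d x1 i = (w_i, w_{i+1})`: the pair of consecutive values reaching nodes
`i` and `i+1`, computed from `x_1 = x1` via the upward equations
`x_{i+1} = 1 − ((1 − x_i)·w_{i−1})/(x_i·w_{i−1} − d_i)`, i.e.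
`w_{i+1} = w_i · (1 − (w_{i−1} − w_i)/(w_i − d_i))` (using `w_i = x_i·w_{i−1}`). -/
noncomputable def upP (d : ℕ → ℝ) (x1 : ℝ) : ℕ → ℝ × ℝ
  | 0 => (d 0, d 0 * x1)
  | i + 1 =>
      let p := upP d x1 i
      (p.2, p.2 * (1 - (p.1 - p.2) / (p.2 - d (i + 1))))

/-- `upW d x1 i = w_i`, the value reaching node `i` under the upward equations
started at `x_1 = x1`. -/
noncomputable def upW (d : ℕ → ℝ) (x1 : ℝ) (i : ℕ) : ℝ :=
  (upP d x1 i).1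

/-- `upX d x1 i = x_i`, the share on edge `e_i` computed from `x_1 = x1` by the
upward equations `x_{i+1} = 1 − ((1 − x_i)·w_{i−1})/(x_i·w_{i−1} − d_i)`
(rewritten as `x_{i+1} = 1 − (w_{i−1} − w_i)/(w_i − d_i)`). -/
noncomputable def upX (d : ℕ → ℝ) (x1 : ℝ) : ℕ → ℝ
  | 0 => 1
  | 1 => x1
  | i + 2 => 1 - (upW d x1 i - upW d x1 (i + 1)) / (upW d x1 (i + 1) - d (i + 1))

/-- `x1` is feasible: `x1 ∈ [0,1]` and the values produced by the upward
equations satisfy `x_i ∈ [0,1]` and `w_i > d_i` for all `i = 1,…,n`. -/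
def Feasible (n : ℕ) (d : ℕ → ℝ) (x1 : ℝ) : Prop :=
  0 ≤ x1 ∧ x1 ≤ 1 ∧
    ∀ i, 1 ≤ i → i ≤ n → (0 ≤ upX d x1 i ∧ upX d x1 i ≤ 1) ∧ d i < upW d x1 i

/-!
Write `δ_k = w_k − w_{k+1}` for the value lost on edge `k + 1`. The upward equations read
`δ_{k+1} = w_{k+1} δ_k / (w_{k+1} − d_{k+1})` and `x_{k+2} = 1 − δ_k / (w_{k+1} − d_{k+1})`.
Both are decreasing in `w_{k+1}` (because `d_{k+1} ≥ 0`) and increasing in `δ_k`, so by induction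
along the path raising `x_1` raises every `w_k` and lowers every `δ_k`, which stays positive while
`x_1 < 1`. Hence every `x_k` increases and stays below `1`, and `w_k(x_1) ≥ w_k(x_1') > d_k`
carries feasibility from `x_1'` to every larger `x_1`.
-/

open Set

noncomputable def upGap (d : ℕ → ℝ) (x1 : ℝ) (i : ℕ) : ℝ :=
  upW d x1 i - upW d x1 (i + 1)

section Recursion

variable (d : ℕ → ℝ) (x1 : ℝ)

lemma upW_one : upW d x1 1 = d 0 * x1 := rfl

lemma upW_add_two (k : ℕ) :
    upW d x1 (k + 2) =
      upW d x1 (k + 1) * (1 - upGap d x1 k / (upW d x1 (k + 1) - d (k + 1))) := rfl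

lemma upX_add_two (k : ℕ) :
    upX d x1 (k + 2) = 1 - upGap d x1 k / (upW d x1 (k + 1) - d (k + 1)) := rfl

lemma upGap_zero : upGap d x1 0 = d 0 * (1 - x1) := by
  show d 0 - d 0 * x1 = _
  ring

lemma upGap_succ (k : ℕ) :
    upGap d x1 (k + 1) = upW d x1 (k + 1) * upGap d x1 k / (upW d x1 (k + 1) - d (k + 1)) := by
  rw [upGap, upW_add_two]
  ring

end Recursion

lemma div_sub_lt_div_sub {c w w' δ δ' : ℝ} (hcw : c < w) (hw : w ≤ w') (hδ' : 0 ≤ δ')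
    (hδ : δ' < δ) : δ' / (w' - c) < δ / (w - c) :=
  div_lt_div₀ hδ (by linarith) (hδ'.trans hδ.le) (by linarith)

lemma mul_div_sub_lt_mul_div_sub {c w w' δ δ' : ℝ} (hc : 0 ≤ c) (hcw : c < w) (hw : w ≤ w')
    (hδ' : 0 ≤ δ') (hδ : δ' < δ) : w' * δ' / (w' - c) < w * δ / (w - c) := by
  have hanti : w' / (w' - c) ≤ w / (w - c) := by
    rw [div_le_div_iff₀ (by linarith) (by linarith)]
    nlinarith
  calc w' * δ' / (w' - c) = δ' * (w' / (w' - c)) := by ring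
    _ ≤ δ' * (w / (w - c)) := mul_le_mul_of_nonneg_left hanti hδ'
    _ < δ * (w / (w - c)) := mul_lt_mul_of_pos_right hδ (div_pos (by linarith) (by linarith))
    _ = w * δ / (w - c) := by ring

section Step

variable {d : ℕ → ℝ} {S : Set ℝ} {k : ℕ}

lemma upward_step (hc : 0 ≤ d (k + 1)) (hd : ∀ x ∈ S, d (k + 1) < upW d x (k + 1))
    (hw : StrictMonoOn (upW d · (k + 1)) S) (hδ : StrictAntiOn (upGap d · k) S)
    (hδpos : ∀ x ∈ S, 0 < upGap d x k) :
    StrictMonoOn (upW d · (k + 2)) S ∧ StrictAntiOn (upGap d · (k + 1)) S ∧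
      ∀ x ∈ S, 0 < upGap d x (k + 1) := by
  have hδ' : StrictAntiOn (upGap d · (k + 1)) S := by
    intro y hy z hz hyz
    simp only [upGap_succ]
    exact mul_div_sub_lt_mul_div_sub hc (hd y hy) (hw hy hz hyz).le (hδpos z hz).le (hδ hy hz hyz)
  have hw' : StrictMonoOn (upW d · (k + 2)) S := by
    intro y hy z hz hyz
    have hsub : ∀ x, upW d x (k + 2) = upW d x (k + 1) - upGap d x (k + 1) := fun x => by
      rw [upGap]; ring
    simp only [hsub]
    linarith [hw hy hz hyz, hδ' hy hz hyz]
  refine ⟨hw', hδ', fun x hx => ?_⟩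
  rw [upGap_succ]
  exact div_pos (mul_pos (hc.trans_lt (hd x hx)) (hδpos x hx)) (sub_pos.2 (hd x hx))

lemma strictMonoOn_upX_add_two (hd : ∀ x ∈ S, d (k + 1) < upW d x (k + 1))
    (hw : StrictMonoOn (upW d · (k + 1)) S) (hδ : StrictAntiOn (upGap d · k) S)
    (hδpos : ∀ x ∈ S, 0 < upGap d x k) : StrictMonoOn (upX d · (k + 2)) S := by
  intro y hy z hz hyz
  simp only [upX_add_two]
  linarith [div_sub_lt_div_sub (hd y hy) (hw hy hz hyz).le (hδpos z hz).le (hδ hy hz hyz)]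

lemma upX_add_two_lt_one {x : ℝ} (hd : d (k + 1) < upW d x (k + 1)) (hδpos : 0 < upGap d x k) :
    upX d x (k + 2) < 1 := by
  rw [upX_add_two]
  linarith [div_pos hδpos (sub_pos.2 hd)]

end Step

section Feasible

variable {n : ℕ} {d : ℕ → ℝ} {x1' : ℝ}

lemma d_lt_upW (hfeas : Feasible n d x1') {i : ℕ} (hi1 : 1 ≤ i) (hin : i ≤ n)
    (hw : StrictMonoOn (upW d · i) (Ico x1' 1)) {x : ℝ} (hx : x ∈ Ico x1' 1) :
    d i < upW d x i :=
  (hfeas.2.2 i hi1 hin).2.trans_le (hw.monotoneOn ⟨le_rfl, hx.1.trans_lt hx.2⟩ hx hx.1)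

lemma strictMonoOn_upW_and_strictAntiOn_upGap (hd0 : 0 < d 0) (hd : ∀ i, 1 ≤ i → i ≤ n → 0 ≤ d i)
    (hfeas : Feasible n d x1') :
    ∀ k, k + 1 ≤ n →
      StrictMonoOn (upW d · (k + 1)) (Ico x1' 1) ∧ StrictAntiOn (upGap d · k) (Ico x1' 1) ∧
        ∀ x ∈ Ico x1' 1, 0 < upGap d x k
  | 0, _ => by
    simp only [zero_add, upW_one, upGap_zero]
    refine ⟨fun y _ z _ hyz => ?_, fun y _ z _ hyz => ?_, fun x hx => ?_⟩
    · exact mul_lt_mul_of_pos_left hyz hd0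
    · exact mul_lt_mul_of_pos_left (by linarith) hd0
    · exact mul_pos hd0 (sub_pos.2 hx.2)
  | k + 1, hk => by
    obtain ⟨hw, hδ, hδpos⟩ := strictMonoOn_upW_and_strictAntiOn_upGap hd0 hd hfeas k (by omega)
    exact upward_step (hd (k + 1) (by omega) (by omega))
      (fun x hx => d_lt_upW hfeas (by omega) (by omega) hw hx) hw hδ hδpos

lemma strictMonoOn_upW (hd0 : 0 < d 0) (hd : ∀ i, 1 ≤ i → i ≤ n → 0 ≤ d i)
    (hfeas : Feasible n d x1') :
    ∀ i, 1 ≤ i → i ≤ n → StrictMonoOn (upW d · i) (Ico x1' 1)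
  | k + 1, _, hin => (strictMonoOn_upW_and_strictAntiOn_upGap hd0 hd hfeas k hin).1

lemma strictMonoOn_upX_and_lt_one (hd0 : 0 < d 0)
    (hd : ∀ i, 1 ≤ i → i ≤ n → 0 ≤ d i) (hfeas : Feasible n d x1') :
    ∀ i, 1 ≤ i → i ≤ n →
      StrictMonoOn (upX d · i) (Ico x1' 1) ∧ ∀ x ∈ Ico x1' 1, upX d x i < 1
  | 1, _, _ => ⟨strictMonoOn_id, fun _ hx => hx.2⟩
  | k + 2, _, hin => by
    obtain ⟨hw, hδ, hδpos⟩ := strictMonoOn_upW_and_strictAntiOn_upGap hd0 hd hfeas k (by omega)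
    have hdw : ∀ x ∈ Ico x1' 1, d (k + 1) < upW d x (k + 1) :=
      fun x hx => d_lt_upW hfeas (by omega) (by omega) hw hx
    exact ⟨strictMonoOn_upX_add_two hdw hw hδ hδpos,
      fun x hx => upX_add_two_lt_one (hdw x hx) (hδpos x hx)⟩

end Feasible

theorem upward_values_monotone_general (n : ℕ) (d : ℕ → ℝ)
    (hd0 : 0 < d 0) (hd : ∀ i, 1 ≤ i → i ≤ n → 0 ≤ d i ∧ d i < d 0)
    (x1' : ℝ) (hfeas : Feasible n d x1') :
    (∀ x1, x1' ≤ x1 → x1 < 1 →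
      Feasible n d x1 ∧
      ∀ i, 1 ≤ i → i ≤ n →
        (upX d x1' i ≤ upX d x1 i ∧ upX d x1 i < 1) ∧ d i < upW d x1 i) ∧
    (∀ y z, x1' ≤ y → y < z → z < 1 →
      ∀ i, 1 ≤ i → i ≤ n → upX d y i < upX d z i ∧ upW d y i < upW d z i) := by
  have hd' i hi1 hin := (hd i hi1 hin).1
  have hw := strictMonoOn_upW hd0 hd' hfeas
  have hx := strictMonoOn_upX_and_lt_one hd0 hd' hfeas
  refine ⟨fun x1 hx1' hx1 => ?_, fun y z hy hyz hz i hi1 hin => ?_⟩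
  · have hmem : x1 ∈ Ico x1' 1 := ⟨hx1', hx1⟩
    have hmem' : x1' ∈ Ico x1' 1 := ⟨le_rfl, hx1'.trans_lt hx1⟩
    have hbounds : ∀ i, 1 ≤ i → i ≤ n →
        (upX d x1' i ≤ upX d x1 i ∧ upX d x1 i < 1) ∧ d i < upW d x1 i := fun i hi1 hin =>
      ⟨⟨(hx i hi1 hin).1.monotoneOn hmem' hmem hx1', (hx i hi1 hin).2 x1 hmem⟩,
        d_lt_upW hfeas hi1 hin (hw i hi1 hin) hmem⟩
    refine ⟨⟨hfeas.1.trans hx1', hx1.le, fun i hi1 hin => ?_⟩, hbounds⟩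
    obtain ⟨⟨hle, hlt⟩, hdw⟩ := hbounds i hi1 hin
    exact ⟨⟨(hfeas.2.2 i hi1 hin).1.1.trans hle, hlt.le⟩, hdw⟩
  · have hymem : y ∈ Ico x1' 1 := ⟨hy, hyz.trans hz⟩
    have hzmem : z ∈ Ico x1' 1 := ⟨hy.trans hyz.le, hz⟩
    exact ⟨(hx i hi1 hin).1 hymem hzmem hyz, hw i hi1 hin hymem hzmem hyz⟩

/-- If `x1' < 1` is feasible then every `x1 ∈ [x1', 1)` is feasible, the upward
values satisfy `x_i(x1) ∈ [x_i(x1'), 1)` and `w_i(x1) > d_i`, and on `[x1', 1)`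
each `x_i` and `w_i` is a strictly increasing function of `x_1`. -/
theorem upward_values_monotone (n : ℕ) (hn : 1 ≤ n) (d : ℕ → ℝ)
    (hd0 : 0 < d 0) (hd : ∀ i, 1 ≤ i → i ≤ n → 0 ≤ d i ∧ d i < d 0)
    (x1' : ℝ) (hx1'0 : 0 ≤ x1') (hx1'1 : x1' < 1) (hfeas : Feasible n d x1') :
    (∀ x1, x1' ≤ x1 → x1 < 1 →
      Feasible n d x1 ∧
      ∀ i, 1 ≤ i → i ≤ n →
        (upX d x1' i ≤ upX d x1 i ∧ upX d x1 i < 1) ∧ d i < upW d x1 i) ∧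
    (∀ y z, x1' ≤ y → y < z → z < 1 →
      ∀ i, 1 ≤ i → i ≤ n → upX d y i < upX d z i ∧ upW d y i < upW d z i) :=
  upward_values_monotone_general n d hd0 hd x1' hfeas
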